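/- arXiv:1811.09659 — 4 statements merged into one kernel-verified Lean document; each statement's English description precedes it below -/
import Mathlib

section
/- Let H be a Hilbert space, G a positive self-adjoint operator, and let b(T) denote the G¹ᐟ²-bound of an operator T defined on D(G¹ᐟ²). For G¹ᐟ²-bounded operators A and B and any E > 0, one has |b(A) − b(B)| ≤ b(A − B) ≤ N_{A−B}(E)/√E, where N_T(E) = sup{‖Tφ‖ : φ ∈ D(G¹ᐟ²), ‖φ‖ ≤ 1, ‖G¹ᐟ²φ‖² ≤ E}. -/
open scoped ComplexOrder

/-- The `√G`-bound of an operator `T` restricted to `D(√G)`. -/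
noncomputable def relBound {H : Type*} [NormedAddCommGroup H] [InnerProductSpace ℂ H]
    (S : Submodule ℂ H) (sqrtG T : S →ₗ[ℂ] H) : ℝ :=
  sInf {b : ℝ | 0 ≤ b ∧ ∃ a : ℝ, 0 ≤ a ∧
    ∀ φ : S, ‖T φ‖ ^ 2 ≤ a ^ 2 * ‖(φ : H)‖ ^ 2 + b ^ 2 * ‖sqrtG φ‖ ^ 2}

/-- The (pure-state) operator E-norm `N_T(E) = sup {‖Tφ‖ : ‖φ‖ ≤ 1, ‖√G φ‖² ≤ E}`. -/
noncomputable def eNorm {H : Type*} [NormedAddCommGroup H] [InnerProductSpace ℂ H]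
    (S : Submodule ℂ H) (sqrtG T : S →ₗ[ℂ] H) (E : ℝ) : ℝ :=
  sSup {r : ℝ | ∃ φ : S, ‖(φ : H)‖ ≤ 1 ∧ ‖sqrtG φ‖ ^ 2 ≤ E ∧ r = ‖T φ‖}

/-!
Replacing the quadratic bounds `‖Tφ‖² ≤ a²‖φ‖² + b²‖√G φ‖²` by linear ones
`‖Tφ‖ ≤ a‖φ‖ + b‖√G φ‖` does not change the infimum `b(T)`: the square root of a quadratic
bound is a linear one, and Young's inequality turns a linear bound `b` into a quadratic bound
for every `b' > b`. Linear bounds of `A` and `B` add up to one of `A ± B`, which gives the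
triangle inequality for `b`; and rescaling `φ` into the set defining `N_T(E)` gives
`‖Tφ‖ ≤ N_T(E) (‖φ‖ + ‖√G φ‖ / √E)`, i.e. `N_T(E)/√E` is a linear bound of `T`.
-/

open scoped Pointwise

lemma Real.sInf_eq_sInf_of_subset_of_forall_lt_mem {s t : Set ℝ} (ht : BddBelow t)
    (hst : s ⊆ t) (hts : ∀ b ∈ t, ∀ b', b < b' → b' ∈ s) : sInf s = sInf t := by
  rcases t.eq_empty_or_nonempty with rfl | ⟨b₀, hb₀⟩
  · rw [Set.subset_empty_iff.mp hst]
  have hs : s.Nonempty := ⟨b₀ + 1, hts b₀ hb₀ _ (lt_add_one b₀)⟩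
  refine le_antisymm (le_csInf ⟨b₀, hb₀⟩ fun b hb => ?_) (csInf_le_csInf ht hs hst)
  exact le_of_forall_gt_imp_ge_of_dense fun b' hb' =>
    csInf_le (ht.mono hst) (hts b hb b' hb')

section RelBound

variable {H : Type*} [NormedAddCommGroup H] [InnerProductSpace ℂ H]
  {S : Submodule ℂ H} {sqrtG : S →ₗ[ℂ] H}

variable (S sqrtG) in
def linearRelBounds (T : S →ₗ[ℂ] H) : Set ℝ :=
  {b : ℝ | 0 ≤ b ∧ ∃ a : ℝ, 0 ≤ a ∧ ∀ φ : S, ‖T φ‖ ≤ a * ‖(φ : H)‖ + b * ‖sqrtG φ‖}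

variable (S sqrtG) in
def eNormSet (T : S →ₗ[ℂ] H) (E : ℝ) : Set ℝ :=
  {r : ℝ | ∃ φ : S, ‖(φ : H)‖ ≤ 1 ∧ ‖sqrtG φ‖ ^ 2 ≤ E ∧ r = ‖T φ‖}

lemma linearRelBounds_bddBelow (T : S →ₗ[ℂ] H) : BddBelow (linearRelBounds S sqrtG T) :=
  ⟨0, fun _ hb => hb.1⟩

lemma mem_linearRelBounds_of_sq {T : S →ₗ[ℂ] H} {a b : ℝ} (ha : 0 ≤ a) (hb : 0 ≤ b)
    (hT : ∀ φ : S, ‖T φ‖ ^ 2 ≤ a ^ 2 * ‖(φ : H)‖ ^ 2 + b ^ 2 * ‖sqrtG φ‖ ^ 2) :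
    b ∈ linearRelBounds S sqrtG T := by
  refine ⟨hb, a, ha, fun φ =>
    (pow_le_pow_iff_left₀ (norm_nonneg _) (by positivity) two_ne_zero).mp ?_⟩
  nlinarith [hT φ, mul_nonneg (mul_nonneg ha hb)
    (mul_nonneg (norm_nonneg (φ : H)) (norm_nonneg (sqrtG φ)))]

/-- Young's inequality `2abxy ≤ ηy² + (ab)²x²/η` with `η = b'² - b²` absorbs the cross term. -/
lemma exists_sq_bound_of_mem_linearRelBounds {T : S →ₗ[ℂ] H} {b b' : ℝ}
    (hb : b ∈ linearRelBounds S sqrtG T) (hbb' : b < b') :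
    ∃ a' : ℝ, 0 ≤ a' ∧
      ∀ φ : S, ‖T φ‖ ^ 2 ≤ a' ^ 2 * ‖(φ : H)‖ ^ 2 + b' ^ 2 * ‖sqrtG φ‖ ^ 2 := by
  obtain ⟨hb0, a, ha, hT⟩ := hb
  set η := b' ^ 2 - b ^ 2
  have hη : 0 < η := by nlinarith
  refine ⟨a * Real.sqrt (1 + b ^ 2 / η), by positivity, fun φ => ?_⟩
  set x := ‖(φ : H)‖
  set y := ‖sqrtG φ‖
  have hsq : (a * Real.sqrt (1 + b ^ 2 / η)) ^ 2 = a ^ 2 + (a * b) ^ 2 / η := by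
    rw [mul_pow, Real.sq_sqrt (by positivity)]; ring
  have young : 2 * (a * x) * (b * y) ≤ η * y ^ 2 + (a * b) ^ 2 / η * x ^ 2 := by
    rw [div_mul_eq_mul_div, ← sub_nonneg]
    have key : η * y ^ 2 + (a * b) ^ 2 * x ^ 2 / η - 2 * (a * x) * (b * y)
        = (η * y - a * b * x) ^ 2 / η := by field_simp; ring
    rw [key]; positivity
  have hTφ : ‖T φ‖ ^ 2 ≤ (a * x + b * y) ^ 2 :=
    pow_le_pow_left₀ (norm_nonneg _) (hT φ) 2
  rw [hsq]
  nlinarith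

theorem relBound_eq_sInf_linearRelBounds (T : S →ₗ[ℂ] H) :
    relBound S sqrtG T = sInf (linearRelBounds S sqrtG T) := by
  refine Real.sInf_eq_sInf_of_subset_of_forall_lt_mem (linearRelBounds_bddBelow T)
    (fun b ⟨hb, a, ha, hT⟩ => mem_linearRelBounds_of_sq ha hb hT) fun b hb b' hbb' => ?_
  obtain ⟨a', ha', hT⟩ := exists_sq_bound_of_mem_linearRelBounds hb hbb'
  exact ⟨hb.1.trans hbb'.le, a', ha', hT⟩

lemma add_subset_linearRelBounds {T A B : S →ₗ[ℂ] H}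
    (hT : ∀ φ : S, ‖T φ‖ ≤ ‖A φ‖ + ‖B φ‖) :
    linearRelBounds S sqrtG A + linearRelBounds S sqrtG B ⊆ linearRelBounds S sqrtG T := by
  rintro _ ⟨bA, ⟨hbA, aA, haA, hA⟩, bB, ⟨hbB, aB, haB, hB⟩, rfl⟩
  refine ⟨add_nonneg hbA hbB, aA + aB, add_nonneg haA haB, fun φ => ?_⟩
  linarith [hT φ, hA φ, hB φ]

theorem relBound_le_add_of_norm_le {T A B : S →ₗ[ℂ] H}
    (hT : ∀ φ : S, ‖T φ‖ ≤ ‖A φ‖ + ‖B φ‖)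
    (hA : (linearRelBounds S sqrtG A).Nonempty) (hB : (linearRelBounds S sqrtG B).Nonempty) :
    relBound S sqrtG T ≤ relBound S sqrtG A + relBound S sqrtG B := by
  simp only [relBound_eq_sInf_linearRelBounds]
  rw [← csInf_add hA (linearRelBounds_bddBelow A) hB (linearRelBounds_bddBelow B)]
  exact csInf_le_csInf (linearRelBounds_bddBelow T) (hA.add hB) (add_subset_linearRelBounds hT)

lemma bddAbove_eNormSet {T : S →ₗ[ℂ] H} {b : ℝ} (hb : b ∈ linearRelBounds S sqrtG T)
    (E : ℝ) : BddAbove (eNormSet S sqrtG T E) := by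
  obtain ⟨hb0, a, ha, hT⟩ := hb
  refine ⟨a + b * Real.sqrt E, ?_⟩
  rintro _ ⟨φ, hφ, hGφ, rfl⟩
  have hGφ' : ‖sqrtG φ‖ ≤ Real.sqrt E := Real.le_sqrt_of_sq_le hGφ
  calc ‖T φ‖ ≤ a * ‖(φ : H)‖ + b * ‖sqrtG φ‖ := hT φ
    _ ≤ a * 1 + b * Real.sqrt E := by gcongr
    _ = a + b * Real.sqrt E := by ring

lemma eNorm_nonneg (T : S →ₗ[ℂ] H) {E : ℝ} (hE : 0 ≤ E)
    (hbdd : BddAbove (eNormSet S sqrtG T E)) :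
    0 ≤ eNorm S sqrtG T E :=
  le_csSup hbdd ⟨0, by simp, by simpa using hE, by simp⟩

/-- Homogeneity: rescale `φ` by `c = max ‖φ‖ (‖√G φ‖ / √E)` into the set defining `N_T(E)`. -/
lemma norm_le_eNorm_mul_max {T : S →ₗ[ℂ] H} {E : ℝ} (hE : 0 < E)
    (hbdd : BddAbove (eNormSet S sqrtG T E)) (φ : S) :
    ‖T φ‖ ≤ eNorm S sqrtG T E * max ‖(φ : H)‖ (‖sqrtG φ‖ / Real.sqrt E) := by
  set c := max ‖(φ : H)‖ (‖sqrtG φ‖ / Real.sqrt E)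
  have hsqrtE : 0 < Real.sqrt E := Real.sqrt_pos.mpr hE
  rcases (le_max_left _ _ |>.trans' (norm_nonneg _) : 0 ≤ c).eq_or_lt with hc | hc
  · have hc0 : c = 0 := hc.symm
    have hφ : (φ : H) = 0 := norm_le_zero_iff.mp (hc0 ▸ le_max_left _ _)
    rw [Submodule.coe_eq_zero.mp hφ, map_zero, norm_zero, hc0, mul_zero]
  set ψ : S := ((c⁻¹ : ℝ) : ℂ) • φ
  have hnorm (v : H) : ‖((c⁻¹ : ℝ) : ℂ) • v‖ = ‖v‖ / c := by
    rw [norm_smul, Complex.norm_real, Real.norm_of_nonneg (inv_nonneg.mpr hc.le), inv_mul_eq_div]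
  have hψ : ‖(ψ : H)‖ ≤ 1 := by
    rw [Submodule.coe_smul, hnorm, div_le_one hc]; exact le_max_left _ _
  have hGψ : ‖sqrtG ψ‖ ^ 2 ≤ E := by
    rw [map_smul, hnorm, div_pow, div_le_iff₀ (by positivity), ← Real.sq_sqrt hE.le, ← mul_pow]
    gcongr
    rw [← div_le_iff₀' hsqrtE]; exact le_max_right _ _
  have hTψ : ‖T φ‖ / c ≤ eNorm S sqrtG T E := by
    rw [← hnorm, ← map_smul]; exact le_csSup hbdd ⟨ψ, hψ, hGψ, rfl⟩
  rwa [div_le_iff₀ hc] at hTψ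

theorem relBound_le_eNorm_div_sqrt {T : S →ₗ[ℂ] H} (hT : (linearRelBounds S sqrtG T).Nonempty)
    {E : ℝ} (hE : 0 < E) :
    relBound S sqrtG T ≤ eNorm S sqrtG T E / Real.sqrt E := by
  obtain ⟨b, hb⟩ := hT
  have hbdd := bddAbove_eNormSet hb E
  have hN := eNorm_nonneg T hE.le hbdd
  rw [relBound_eq_sInf_linearRelBounds]
  refine csInf_le (linearRelBounds_bddBelow T)
    ⟨by positivity, eNorm S sqrtG T E, hN, fun φ => ?_⟩
  calc ‖T φ‖ ≤ eNorm S sqrtG T E * max ‖(φ : H)‖ (‖sqrtG φ‖ / Real.sqrt E) :=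
        norm_le_eNorm_mul_max hE hbdd φ
    _ ≤ eNorm S sqrtG T E * (‖(φ : H)‖ + ‖sqrtG φ‖ / Real.sqrt E) := by
        gcongr; exact max_le_add_of_nonneg (norm_nonneg _) (by positivity)
    _ = _ := by ring

end RelBound

theorem stmt8_general {H : Type*} [NormedAddCommGroup H] [InnerProductSpace ℂ H]
    (S : Submodule ℂ H)
    (sqrtG : S →ₗ[ℂ] H)
    (A B : S →ₗ[ℂ] H)
    (hA : ∃ a b : ℝ, 0 ≤ a ∧ 0 ≤ b ∧
      ∀ φ : S, ‖A φ‖ ^ 2 ≤ a ^ 2 * ‖(φ : H)‖ ^ 2 + b ^ 2 * ‖sqrtG φ‖ ^ 2)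
    (hB : ∃ a b : ℝ, 0 ≤ a ∧ 0 ≤ b ∧
      ∀ φ : S, ‖B φ‖ ^ 2 ≤ a ^ 2 * ‖(φ : H)‖ ^ 2 + b ^ 2 * ‖sqrtG φ‖ ^ 2)
    (E : ℝ) (hE : 0 < E) :
    |relBound S sqrtG A - relBound S sqrtG B| ≤ relBound S sqrtG (A - B) ∧
    relBound S sqrtG (A - B) ≤ eNorm S sqrtG (A - B) E / Real.sqrt E := by
  obtain ⟨aA, bA, haA, hbA, hA⟩ := hA
  obtain ⟨aB, bB, haB, hbB, hB⟩ := hB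
  have hA' : (linearRelBounds S sqrtG A).Nonempty := ⟨bA, mem_linearRelBounds_of_sq haA hbA hA⟩
  have hB' : (linearRelBounds S sqrtG B).Nonempty := ⟨bB, mem_linearRelBounds_of_sq haB hbB hB⟩
  have hAB : (linearRelBounds S sqrtG (A - B)).Nonempty :=
    (hA'.add hB').mono (add_subset_linearRelBounds fun φ => norm_sub_le (A φ) (B φ))
  have hle_A : relBound S sqrtG A ≤ relBound S sqrtG (A - B) + relBound S sqrtG B :=
    relBound_le_add_of_norm_le (fun φ => by simpa using norm_add_le ((A - B) φ) (B φ)) hAB hB'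
  have hle_B : relBound S sqrtG B ≤ relBound S sqrtG A + relBound S sqrtG (A - B) :=
    relBound_le_add_of_norm_le (fun φ => by simpa using norm_sub_le (A φ) ((A - B) φ)) hA' hAB
  exact ⟨abs_sub_le_iff.mpr ⟨by linarith, by linarith⟩, relBound_le_eNorm_div_sqrt hAB hE⟩

/-- For `√G`-bounded operators `A, B` and any `E > 0`:
`|b(A) − b(B)| ≤ b(A − B) ≤ N_{A−B}(E)/√E`, so the `√G`-bound is continuous w.r.t.
the E-norm. -/
theorem stmt8 {H : Type*} [NormedAddCommGroup H] [InnerProductSpace ℂ H] [CompleteSpace H]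
    (S : Submodule ℂ H) (hdense : Dense (S : Set H))
    (sqrtG : S →ₗ[ℂ] H)
    (hsym : ∀ x y : S, (inner ℂ (sqrtG x) (y : H) : ℂ) = inner ℂ (x : H) (sqrtG y))
    (hpos : ∀ x : S, 0 ≤ (inner ℂ (x : H) (sqrtG x) : ℂ))
    (A B : S →ₗ[ℂ] H)
    (hA : ∃ a b : ℝ, 0 ≤ a ∧ 0 ≤ b ∧
      ∀ φ : S, ‖A φ‖ ^ 2 ≤ a ^ 2 * ‖(φ : H)‖ ^ 2 + b ^ 2 * ‖sqrtG φ‖ ^ 2)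
    (hB : ∃ a b : ℝ, 0 ≤ a ∧ 0 ≤ b ∧
      ∀ φ : S, ‖B φ‖ ^ 2 ≤ a ^ 2 * ‖(φ : H)‖ ^ 2 + b ^ 2 * ‖sqrtG φ‖ ^ 2)
    (E : ℝ) (hE : 0 < E) :
    |relBound S sqrtG A - relBound S sqrtG B| ≤ relBound S sqrtG (A - B) ∧
    relBound S sqrtG (A - B) ≤ eNorm S sqrtG (A - B) E / Real.sqrt E :=
  stmt8_general S sqrtG A B hA hB E hE
end

section
/- Let f : (0,∞) → ℝ₊ be nonnegative and nondecreasing with f² concave, and suppose inf_{E>0} f(E)/√E = 0. Then f(E) = o(√E) as E → ∞, i.e., lim_{E→∞} f(E)/√E = 0. -/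
open Filter Set

/-- If `f : (0,∞) → ℝ₊` is nonnegative, nondecreasing, `f²` is concave,
and `inf_{E>0} f(E)/√E = 0`, then `f(E) = o(√E)` as `E → ∞`, i.e.
`lim_{E→∞} f(E)/√E = 0`. -/
theorem stmt10 (f : ℝ → ℝ)
    (hnn : ∀ E, 0 < E → 0 ≤ f E)
    (hmono : ∀ E₁ E₂, 0 < E₁ → E₁ ≤ E₂ → f E₁ ≤ f E₂)
    (hconc : ConcaveOn ℝ (Set.Ioi 0) (fun E => (f E) ^ 2))
    (hinf : (⨅ E : Set.Ioi (0 : ℝ), f E / Real.sqrt E) = 0) :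
    Tendsto (fun E => f E / Real.sqrt E) atTop (nhds 0) := by
  have key : ∀ E M : ℝ, 0 < E → E ≤ M → f M / Real.sqrt M ≤ f E / Real.sqrt E := by
    intro E M hE hEM
    rcases eq_or_lt_of_le hEM with rfl | hlt
    · exact le_refl _
    have hM : 0 < M := hE.trans hlt
    have hg : E / M * (f M) ^ 2 ≤ (f E) ^ 2 := by
      have hev : ∀ ε ∈ Ioo (0:ℝ) E,
          (E - ε) / (M - ε) * (f M) ^ 2 ≤ (f E) ^ 2 := by
        rintro ε ⟨hε, hεE⟩
        have hMε : 0 < M - ε := by linarith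
        have ha : (0:ℝ) ≤ (M - E) / (M - ε) := div_nonneg (by linarith) hMε.le
        have hb : (0:ℝ) ≤ (E - ε) / (M - ε) := div_nonneg (by linarith) hMε.le
        have hab : (M - E) / (M - ε) + (E - ε) / (M - ε) = 1 := by
          rw [← add_div, div_eq_one_iff_eq hMε.ne']
          ring
        have hcomb := hconc.2 (mem_Ioi.2 hε) (mem_Ioi.2 hM) ha hb hab
        simp only [smul_eq_mul] at hcomb
        have hpt : (M - E) / (M - ε) * ε + (E - ε) / (M - ε) * M = E := by
          rw [div_mul_eq_mul_div, div_mul_eq_mul_div, ← add_div,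
            div_eq_iff hMε.ne']
          ring
        rw [hpt] at hcomb
        have hεnn : 0 ≤ (M - E) / (M - ε) * (f ε) ^ 2 :=
          mul_nonneg ha (sq_nonneg _)
        linarith
      have htend : Tendsto (fun ε => (E - ε) / (M - ε) * (f M) ^ 2)
          (nhdsWithin 0 (Ioi 0)) (nhds (E / M * (f M) ^ 2)) := by
        have hc : ContinuousAt (fun ε : ℝ => (E - ε) / (M - ε) * (f M) ^ 2) 0 := by
          apply ContinuousAt.mul _ continuousAt_const
          exact (continuousAt_const.sub continuousAt_id).div
            (continuousAt_const.sub continuousAt_id) (by simpa using hM.ne')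
        have := hc.tendsto.mono_left (nhdsWithin_le_nhds (s := Ioi 0))
        simpa using this
      have hmem : Ioo (0:ℝ) E ∈ nhdsWithin (0:ℝ) (Ioi 0) :=
        Ioo_mem_nhdsGT_of_mem ⟨le_refl 0, hE⟩
      exact le_of_tendsto htend (eventually_of_mem hmem hev)
    rw [div_mul_eq_mul_div, div_le_iff₀ hM] at hg
    have h1 : f M / Real.sqrt M = Real.sqrt ((f M) ^ 2 / M) := by
      rw [Real.sqrt_div (sq_nonneg _), Real.sqrt_sq (hnn M hM)]
    have h2 : f E / Real.sqrt E = Real.sqrt ((f E) ^ 2 / E) := by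
      rw [Real.sqrt_div (sq_nonneg _), Real.sqrt_sq (hnn E hE)]
    rw [h1, h2]
    apply Real.sqrt_le_sqrt
    rw [div_le_div_iff₀ hM hE]
    linarith
  rw [Metric.tendsto_atTop]
  intro ε hε
  have hex : ∃ x : Set.Ioi (0:ℝ), f x / Real.sqrt x < ε :=
    exists_lt_of_ciInf_lt (by rw [hinf]; exact hε)
  obtain ⟨⟨E₀, hE₀⟩, hltε⟩ := hex
  refine ⟨max E₀ 1, fun E hE => ?_⟩
  have hE1 : (1:ℝ) ≤ E := le_trans (le_max_right _ _) hE
  have hEp : 0 < E := lt_of_lt_of_le one_pos hE1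
  have h1 := key E₀ E hE₀ (le_trans (le_max_left _ _) hE)
  have h2 : 0 ≤ f E / Real.sqrt E := div_nonneg (hnn E hEp) (Real.sqrt_nonneg E)
  rw [Real.dist_eq, sub_zero, abs_of_nonneg h2]
  exact lt_of_le_of_lt h1 hltε
end

section
/- Let H be a Hilbert space, G a positive self-adjoint operator, A a linear operator on D(G¹ᐟ²), and N(E) = sup{‖Aφ‖ : φ ∈ D(G¹ᐟ²), ‖φ‖ ≤ 1, ‖G¹ᐟ²φ‖² ≤ E}. If φ, ψ ∈ D(G¹ᐟ²) satisfy ‖G¹ᐟ²φ‖² ≤ E, ‖G¹ᐟ²ψ‖² ≤ E, and ‖φ − ψ‖ ≤ ε for some ε > 0, then ‖A(φ − ψ)‖ ≤ ε · N(4E/ε²). -/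
/-! Rescaling `φ - ψ` by `ε⁻¹` gives a vector of norm at most `1` whose energy `‖√G ·‖²` is at most
`4E/ε²`, by the triangle inequality; homogeneity of `A` then turns the energy-constrained bound on
the rescaled vector into the claim. -/

open scoped ComplexOrder ENNReal

theorem norm_sub_sq_le_four_mul {V : Type*} [SeminormedAddCommGroup V] {x y : V} {E : ℝ}
    (hx : ‖x‖ ^ 2 ≤ E) (hy : ‖y‖ ^ 2 ≤ E) : ‖x - y‖ ^ 2 ≤ 4 * E := by
  have htri : ‖x - y‖ ≤ ‖x‖ + ‖y‖ := norm_sub_le x y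
  nlinarith [norm_nonneg (x - y), sq_nonneg (‖x‖ - ‖y‖)]

section EnergyBoundedNorm

variable {𝕜 V W₁ W₂ : Type*} [NormedField 𝕜] [SeminormedAddCommGroup V] [NormedSpace 𝕜 V]
  [SeminormedAddCommGroup W₁] [NormedSpace 𝕜 W₁] [SeminormedAddCommGroup W₂] [NormedSpace 𝕜 W₂]

noncomputable def energyBoundedNorm (A : V →ₗ[𝕜] W₁) (T : V →ₗ[𝕜] W₂) (E : ℝ) : ℝ≥0∞ :=
  ⨆ (χ : V) (_ : ‖χ‖ ≤ 1 ∧ ‖T χ‖ ^ 2 ≤ E), (‖A χ‖₊ : ℝ≥0∞)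

variable (A : V →ₗ[𝕜] W₁) (T : V →ₗ[𝕜] W₂)

theorem energyBoundedNorm_mono : Monotone (energyBoundedNorm A T) :=
  fun _ _ hEF ↦ iSup₂_mono' fun χ hχ ↦ ⟨χ, ⟨hχ.1, hχ.2.trans hEF⟩, le_rfl⟩

theorem nnnorm_le_energyBoundedNorm {χ : V} {E : ℝ} (hχ : ‖χ‖ ≤ 1) (hTχ : ‖T χ‖ ^ 2 ≤ E) :
    (‖A χ‖₊ : ℝ≥0∞) ≤ energyBoundedNorm A T E :=
  le_iSup₂ (f := fun χ (_ : ‖χ‖ ≤ 1 ∧ ‖T χ‖ ^ 2 ≤ E) ↦ (‖A χ‖₊ : ℝ≥0∞)) χ ⟨hχ, hTχ⟩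

theorem nnnorm_le_enorm_mul_energyBoundedNorm {c : 𝕜} (hc : c ≠ 0) {x : V} (hx : ‖x‖ ≤ ‖c‖) :
    (‖A x‖₊ : ℝ≥0∞) ≤ ‖c‖ₑ * energyBoundedNorm A T (‖T x‖ ^ 2 / ‖c‖ ^ 2) := by
  have hc' : 0 < ‖c‖ := norm_pos_iff.mpr hc
  have hx_eq : x = c • c⁻¹ • x := (smul_inv_smul₀ hc x).symm
  have hχ : ‖c⁻¹ • x‖ ≤ 1 := by
    rw [norm_smul, norm_inv, inv_mul_le_one₀ hc']
    exact hx
  have hTχ : ‖T (c⁻¹ • x)‖ ^ 2 = ‖T x‖ ^ 2 / ‖c‖ ^ 2 := by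
    rw [map_smul, norm_smul, norm_inv, mul_pow, inv_pow, inv_mul_eq_div]
  calc (‖A x‖₊ : ℝ≥0∞) = ‖c‖ₑ * ‖A (c⁻¹ • x)‖₊ := by
        rw [← enorm_eq_nnnorm, ← enorm_eq_nnnorm, ← enorm_smul, ← map_smul, ← hx_eq]
    _ ≤ ‖c‖ₑ * energyBoundedNorm A T (‖T x‖ ^ 2 / ‖c‖ ^ 2) :=
        mul_le_mul_right (nnnorm_le_energyBoundedNorm A T hχ hTχ.le) _

end EnergyBoundedNorm

theorem stmt12_general {H : Type*} [NormedAddCommGroup H] [InnerProductSpace ℂ H]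
    (S : Submodule ℂ H)
    (sqrtG : S →ₗ[ℂ] H)
    (A : S →ₗ[ℂ] H)
    (N : ℝ → ℝ≥0∞)
    (hN : ∀ E : ℝ, N E = ⨆ (χ : S) (_ : ‖(χ : H)‖ ≤ 1 ∧ ‖sqrtG χ‖ ^ 2 ≤ E),
      (‖A χ‖₊ : ℝ≥0∞))
    (E ε : ℝ) (hε : 0 < ε)
    (φ ψ : S) (hφ : ‖sqrtG φ‖ ^ 2 ≤ E) (hψ : ‖sqrtG ψ‖ ^ 2 ≤ E)
    (hd : ‖(φ : H) - (ψ : H)‖ ≤ ε) :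
    (‖A (φ - ψ)‖₊ : ℝ≥0∞) ≤ ENNReal.ofReal ε * N (4 * E / ε ^ 2) := by
  have hN : N = energyBoundedNorm A sqrtG := funext hN
  have hε_norm : ‖(ε : ℂ)‖ = ε := by simp [hε.le]
  have hεₑ : ‖(ε : ℂ)‖ₑ = ENNReal.ofReal ε := by
    rw [← ofReal_norm, hε_norm]
  have hG : ‖sqrtG (φ - ψ)‖ ^ 2 ≤ 4 * E := by
    rw [map_sub]
    exact norm_sub_sq_le_four_mul hφ hψ
  calc (‖A (φ - ψ)‖₊ : ℝ≥0∞)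
      ≤ ‖(ε : ℂ)‖ₑ * energyBoundedNorm A sqrtG (‖sqrtG (φ - ψ)‖ ^ 2 / ‖(ε : ℂ)‖ ^ 2) :=
        nnnorm_le_enorm_mul_energyBoundedNorm A sqrtG (by exact_mod_cast hε.ne')
          (by rw [hε_norm]; exact hd)
    _ ≤ ENNReal.ofReal ε * N (4 * E / ε ^ 2) := by
        rw [hεₑ, hε_norm, hN]
        gcongr
        exact energyBoundedNorm_mono A sqrtG (by gcongr)

/-- Quantitative uniform continuity estimate (Corollary 1 with `K = ℂ`):
if `‖√G φ‖² ≤ E`, `‖√G ψ‖² ≤ E` and `‖φ − ψ‖ ≤ ε`, then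
`‖A(φ − ψ)‖ ≤ ε · N(4E/ε²)`, where `N` is the (possibly infinite) pure-state
operator E-norm of `A`. -/
theorem stmt12 {H : Type*} [NormedAddCommGroup H] [InnerProductSpace ℂ H] [CompleteSpace H]
    (S : Submodule ℂ H) (hdense : Dense (S : Set H))
    (sqrtG : S →ₗ[ℂ] H)
    (hsym : ∀ x y : S, (inner ℂ (sqrtG x) (y : H) : ℂ) = inner ℂ (x : H) (sqrtG y))
    (hpos : ∀ x : S, 0 ≤ (inner ℂ (x : H) (sqrtG x) : ℂ))
    (A : S →ₗ[ℂ] H)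
    (N : ℝ → ℝ≥0∞)
    (hN : ∀ E : ℝ, N E = ⨆ (χ : S) (_ : ‖(χ : H)‖ ≤ 1 ∧ ‖sqrtG χ‖ ^ 2 ≤ E),
      (‖A χ‖₊ : ℝ≥0∞))
    (E ε : ℝ) (hE : 0 < E) (hε : 0 < ε)
    (φ ψ : S) (hφ : ‖sqrtG φ‖ ^ 2 ≤ E) (hψ : ‖sqrtG ψ‖ ^ 2 ≤ E)
    (hd : ‖(φ : H) - (ψ : H)‖ ≤ ε) :
    (‖A (φ - ψ)‖₊ : ℝ≥0∞) ≤ ENNReal.ofReal ε * N (4 * E / ε ^ 2) :=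
  stmt12_general S sqrtG A N hN E ε hε φ ψ hφ hψ hd
end

section
/- Let H be a Hilbert space, G a positive self-adjoint operator, and A a linear operator with D(G¹ᐟ²) ⊆ D(A). Suppose N(E) := sup{‖Aφ‖ : φ ∈ D(G¹ᐟ²), ‖φ‖ ≤ 1, ‖G¹ᐟ²φ‖² ≤ E} is finite for some E₀ > 0 and N² is concave and nondecreasing on (0,∞). Then N(E) is finite for every E > 0, and moreover A is G¹ᐟ²-bounded: there exist a, b ≥ 0 with ‖Aφ‖² ≤ a²‖φ‖² + b²‖G¹ᐟ²φ‖² for all φ ∈ D(G¹ᐟ²). -/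
open scoped ComplexOrder

/-!
Finiteness of the `E₀`-norm gives a relative bound, by homogeneity: for `φ ≠ 0` put
`s² = ‖φ‖² + ‖√G φ‖² / E₀`; then `φ / s` has norm at most `1` and energy at most `E₀`, so
`‖A φ‖ ≤ M s` where `M` bounds `‖A ψ‖` over such `ψ`. Squaring gives
`‖A φ‖² ≤ M² ‖φ‖² + (M² / E₀) ‖√G φ‖²`, which bounds the `E`-norm for every `E`.
-/

section RelativeBound

variable {𝕜 X Y Z : Type*} [RCLike 𝕜]
  [NormedAddCommGroup X] [NormedSpace 𝕜 X] [NormedAddCommGroup Y] [NormedSpace 𝕜 Y]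
  [NormedAddCommGroup Z] [NormedSpace 𝕜 Z]

theorem sq_norm_ofReal_inv_smul {V : Type*} [NormedAddCommGroup V] [NormedSpace 𝕜 V]
    (c : ℝ) (v : V) : ‖((c⁻¹ : ℝ) : 𝕜) • v‖ ^ 2 = ‖v‖ ^ 2 / c ^ 2 := by
  rw [norm_smul, RCLike.norm_ofReal, mul_pow, sq_abs, inv_pow, inv_mul_eq_div]

theorem sq_norm_le_of_norm_le_on_energy_ball (T : X →ₗ[𝕜] Y) (A : X →ₗ[𝕜] Z)
    {E₀ M : ℝ} (hE₀ : 0 < E₀) (hM : ∀ ψ : X, ‖ψ‖ ≤ 1 → ‖T ψ‖ ^ 2 ≤ E₀ → ‖A ψ‖ ≤ M) (φ : X) :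
    ‖A φ‖ ^ 2 ≤ M ^ 2 * ‖φ‖ ^ 2 + M ^ 2 / E₀ * ‖T φ‖ ^ 2 := by
  rcases eq_or_ne φ 0 with rfl | hφ
  · simp
  set s := √(‖φ‖ ^ 2 + ‖T φ‖ ^ 2 / E₀)
  have hs2 : s ^ 2 = ‖φ‖ ^ 2 + ‖T φ‖ ^ 2 / E₀ := Real.sq_sqrt (by positivity)
  have hs : 0 < s := Real.sqrt_pos.mpr (by positivity)
  have hψ : ‖((s⁻¹ : ℝ) : 𝕜) • φ‖ ≤ 1 := by
    rw [← sq_le_one_iff₀ (norm_nonneg _), sq_norm_ofReal_inv_smul, div_le_one (by positivity),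
      hs2]
    have := div_nonneg (sq_nonneg ‖T φ‖) hE₀.le
    linarith
  have hTψ : ‖T (((s⁻¹ : ℝ) : 𝕜) • φ)‖ ^ 2 ≤ E₀ := by
    rw [map_smul, sq_norm_ofReal_inv_smul, div_le_iff₀ (by positivity), hs2, mul_add,
      mul_div_cancel₀ _ hE₀.ne']
    nlinarith [norm_nonneg φ]
  have hAψ := hM _ hψ hTψ
  rw [map_smul, ← sq_le_sq₀ (norm_nonneg _) ((norm_nonneg _).trans hAψ), sq_norm_ofReal_inv_smul,
    div_le_iff₀ (by positivity), hs2] at hAψ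
  exact hAψ.trans_eq (by ring)

theorem bddAbove_norm_of_sq_norm_le (T : X →ₗ[𝕜] Y) (A : X →ₗ[𝕜] Z) {a b : ℝ}
    (hAB : ∀ φ : X, ‖A φ‖ ^ 2 ≤ a ^ 2 * ‖φ‖ ^ 2 + b ^ 2 * ‖T φ‖ ^ 2) (E : ℝ) :
    BddAbove {r : ℝ | ∃ φ : X, ‖φ‖ ≤ 1 ∧ ‖T φ‖ ^ 2 ≤ E ∧ r = ‖A φ‖} := by
  refine ⟨√(a ^ 2 + b ^ 2 * E), ?_⟩
  rintro _ ⟨φ, hφ, hTφ, rfl⟩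
  refine Real.le_sqrt_of_sq_le ((hAB φ).trans ?_)
  gcongr
  exact mul_le_of_le_one_right (sq_nonneg a) (pow_le_one₀ (norm_nonneg φ) hφ)

end RelativeBound

theorem stmt16_general {H : Type*} [NormedAddCommGroup H] [InnerProductSpace ℂ H]
    (S : Submodule ℂ H)
    (sqrtG : S →ₗ[ℂ] H)
    (A : S →ₗ[ℂ] H)
    (E₀ : ℝ) (hE₀ : 0 < E₀)
    (hfin : BddAbove {r : ℝ | ∃ φ : S, ‖(φ : H)‖ ≤ 1 ∧ ‖sqrtG φ‖ ^ 2 ≤ E₀ ∧ r = ‖A φ‖}) :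
    (∀ E : ℝ, 0 < E →
      BddAbove {r : ℝ | ∃ φ : S, ‖(φ : H)‖ ≤ 1 ∧ ‖sqrtG φ‖ ^ 2 ≤ E ∧ r = ‖A φ‖}) ∧
    ∃ a b : ℝ, 0 ≤ a ∧ 0 ≤ b ∧
      ∀ φ : S, ‖A φ‖ ^ 2 ≤ a ^ 2 * ‖(φ : H)‖ ^ 2 + b ^ 2 * ‖sqrtG φ‖ ^ 2 := by
  obtain ⟨M, hM⟩ := hfin
  have hbound : ∀ ψ : S, ‖ψ‖ ≤ 1 → ‖sqrtG ψ‖ ^ 2 ≤ E₀ → ‖A ψ‖ ≤ M :=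
    fun ψ hψ hGψ => hM ⟨ψ, hψ, hGψ, rfl⟩
  have hM0 : 0 ≤ M := by simpa using hbound 0 (by simp) (by simpa using hE₀.le)
  have hrel : ∀ φ : S, ‖A φ‖ ^ 2 ≤ M ^ 2 * ‖φ‖ ^ 2 + (M / √E₀) ^ 2 * ‖sqrtG φ‖ ^ 2 := by
    rw [div_pow, Real.sq_sqrt hE₀.le]
    exact sq_norm_le_of_norm_le_on_energy_ball sqrtG A hE₀ hbound
  exact ⟨fun E _ => bddAbove_norm_of_sq_norm_le sqrtG A hrel E,
    M, M / √E₀, hM0, by positivity, hrel⟩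

/-- one direction of Proposition 1A: if the (pure-state) operator E-norm
`N(E) = sup {‖Aφ‖ : φ ∈ D(√G), ‖φ‖ ≤ 1, ‖√G φ‖² ≤ E}` is finite for some `E₀ > 0`
and `N²` is concave and nondecreasing on `(0,∞)`, then `N(E)` is finite for every
`E > 0` and `A` is `√G`-bounded. -/
theorem stmt16 {H : Type*} [NormedAddCommGroup H] [InnerProductSpace ℂ H] [CompleteSpace H]
    (S : Submodule ℂ H) (hdense : Dense (S : Set H))
    (sqrtG : S →ₗ[ℂ] H)
    (hsym : ∀ x y : S, (inner ℂ (sqrtG x) (y : H) : ℂ) = inner ℂ (x : H) (sqrtG y))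
    (hpos : ∀ x : S, 0 ≤ (inner ℂ (x : H) (sqrtG x) : ℂ))
    (A : S →ₗ[ℂ] H)
    (N : ℝ → ℝ)
    (hNdef : ∀ E : ℝ, N E =
      sSup {r : ℝ | ∃ φ : S, ‖(φ : H)‖ ≤ 1 ∧ ‖sqrtG φ‖ ^ 2 ≤ E ∧ r = ‖A φ‖})
    (E₀ : ℝ) (hE₀ : 0 < E₀)
    (hfin : BddAbove {r : ℝ | ∃ φ : S, ‖(φ : H)‖ ≤ 1 ∧ ‖sqrtG φ‖ ^ 2 ≤ E₀ ∧ r = ‖A φ‖})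
    (hconc : ConcaveOn ℝ (Set.Ioi 0) (fun E => (N E) ^ 2))
    (hmono : ∀ E₁ E₂, 0 < E₁ → E₁ ≤ E₂ → N E₁ ≤ N E₂) :
    (∀ E : ℝ, 0 < E →
      BddAbove {r : ℝ | ∃ φ : S, ‖(φ : H)‖ ≤ 1 ∧ ‖sqrtG φ‖ ^ 2 ≤ E ∧ r = ‖A φ‖}) ∧
    ∃ a b : ℝ, 0 ≤ a ∧ 0 ≤ b ∧
      ∀ φ : S, ‖A φ‖ ^ 2 ≤ a ^ 2 * ‖(φ : H)‖ ^ 2 + b ^ 2 * ‖sqrtG φ‖ ^ 2 :=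
  stmt16_general S sqrtG A E₀ hE₀ hfin
end
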